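/- The Zaider-Minerbo TCP formula TCP(t) = [1 - n(t)/(n₀ + b·n₀·n(t)·∫₀ᵗ ds/n(s))]^{n₀}, where n(t) = n₀exp(bt - ∫₀ᵗ r(s)ds), always takes values in [0,1], and when b = 0 it reduces to TCP(t) = (1 - exp(-∫₀ᵗ r(s)ds))^{n₀}. -/

import Mathlib

/-!
With `Q t = 1 / n t + b ∫₀ᵗ ds / n(s)`, the denominator of the Zaider–Minerbo formula is
`n₀ n(t) Q(t)`, so the subtracted ratio is `(n₀ Q(t))⁻¹`. Along a solution of `n' = (b - r) n`
the birth terms cancel in `Q' = r / n ≥ 0`; since `n₀ Q(0) = 1`, we get `n₀ Q(t) ≥ 1` for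
`t ≥ 0`, hence a ratio in `(0, 1]`.
-/

open Real

theorem div_add_mul_mul_eq_inv {K : Type*} [Field K] {x : K} (hx : x ≠ 0) (b c I : K) :
    x / (c + b * c * x * I) = (c * (1 / x + b * I))⁻¹ := by
  rw [div_eq_mul_inv, ← inv_inv x, ← mul_inv, inv_inv]
  congr 1
  field_simp

theorem one_sub_inv_pow_mem_Icc {x : ℝ} (hx : 1 ≤ x) (k : ℕ) :
    (1 - x⁻¹) ^ k ∈ Set.Icc 0 1 := by
  have hnonneg : 0 ≤ 1 - x⁻¹ := sub_nonneg.2 (inv_le_one_of_one_le₀ hx)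
  exact ⟨pow_nonneg hnonneg k,
    pow_le_one₀ hnonneg (sub_le_self _ (inv_nonneg.2 (zero_le_one.trans hx)))⟩

theorem hasDerivAt_mul_exp_sub_integral {r : ℝ → ℝ} (hr : Continuous r) (c b t : ℝ) :
    HasDerivAt (fun t => c * exp (b * t - ∫ s in (0:ℝ)..t, r s))
      ((b - r t) * (c * exp (b * t - ∫ s in (0:ℝ)..t, r s))) t := by
  have hexp : HasDerivAt (fun t => c * exp (b * t - ∫ s in (0:ℝ)..t, r s))
      (c * (exp (b * t - ∫ s in (0:ℝ)..t, r s) * (b * 1 - r t))) t :=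
    (((hasDerivAt_id t).const_mul b).sub
      (hr.integral_hasStrictDerivAt 0 t).hasDerivAt).exp.const_mul c
  exact hexp.congr_deriv (by ring)

section

variable {n r : ℝ → ℝ} {b : ℝ}

theorem hasDerivAt_inv_add_mul_integral_inv (hn : ∀ t, HasDerivAt n ((b - r t) * n t) t)
    (hn0 : ∀ t, n t ≠ 0) (t : ℝ) :
    HasDerivAt (fun t => 1 / n t + b * ∫ s in (0:ℝ)..t, 1 / n s) (r t / n t) t := by
  have hcont : Continuous fun s => 1 / n s :=
    continuous_const.div (continuous_iff_continuousAt.2 fun s => (hn s).continuousAt) hn0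
  have hsum : HasDerivAt (fun t => 1 / n t + b * ∫ s in (0:ℝ)..t, 1 / n s)
      ((0 * n t - 1 * ((b - r t) * n t)) / n t ^ 2 + b * (1 / n t)) t :=
    ((hasDerivAt_const t (1 : ℝ)).div (hn t) (hn0 t)).add
      ((hcont.integral_hasStrictDerivAt 0 t).hasDerivAt.const_mul b)
  refine hsum.congr_deriv ?_
  field_simp
  ring

theorem monotone_inv_add_mul_integral_inv (hn : ∀ t, HasDerivAt n ((b - r t) * n t) t)
    (hpos : ∀ t, 0 < n t) (hr : ∀ t, 0 ≤ r t) :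
    Monotone fun t => 1 / n t + b * ∫ s in (0:ℝ)..t, 1 / n s :=
  monotone_of_hasDerivAt_nonneg (hasDerivAt_inv_add_mul_integral_inv hn fun t => (hpos t).ne')
    fun t => div_nonneg (hr t) (hpos t).le

end

theorem zaider_minerbo_TCP_general (n₀ : ℕ) (hn₀ : 0 < n₀) (b : ℝ)
    (r : ℝ → ℝ) (hr : Continuous r) (hrpos : ∀ t, 0 ≤ r t)
    (n : ℝ → ℝ)
    (hn : ∀ t, n t = (n₀ : ℝ) * Real.exp (b * t - ∫ s in (0:ℝ)..t, r s))
    (TCP : ℝ → ℝ)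
    (hTCP : ∀ t, TCP t =
      (1 - n t / ((n₀ : ℝ) + b * (n₀ : ℝ) * n t *
        ∫ s in (0:ℝ)..t, 1 / n s)) ^ n₀) :
    (∀ t ≥ (0:ℝ), 0 ≤ TCP t ∧ TCP t ≤ 1) ∧
      (b = 0 → ∀ t ≥ (0:ℝ),
        TCP t = (1 - Real.exp (-∫ s in (0:ℝ)..t, r s)) ^ n₀) := by
  have hc : (0 : ℝ) < n₀ := Nat.cast_pos.2 hn₀
  have hpos : ∀ t, 0 < n t := fun t => hn t ▸ mul_pos hc (exp_pos _)
  have hode : ∀ t, HasDerivAt n ((b - r t) * n t) t := by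
    obtain rfl : n = _ := funext hn
    exact hasDerivAt_mul_exp_sub_integral hr n₀ b
  have hQ : ∀ t ≥ (0:ℝ), 1 ≤ n₀ * (1 / n t + b * ∫ s in (0:ℝ)..t, 1 / n s) := by
    intro t ht
    calc (1 : ℝ) = n₀ * (1 / n 0 + b * ∫ s in (0:ℝ)..0, 1 / n s) := by simp [hn 0, hc.ne']
      _ ≤ _ := mul_le_mul_of_nonneg_left
        (monotone_inv_add_mul_integral_inv hode hpos hrpos ht) hc.le
  refine ⟨fun t ht => ?_, fun hb0 t _ => ?_⟩
  · rw [hTCP, div_add_mul_mul_eq_inv (hpos t).ne']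
    exact one_sub_inv_pow_mem_Icc (hQ t ht) n₀
  · rw [hTCP, hn, hb0]
    simp only [zero_mul, add_zero, zero_sub]
    rw [mul_div_cancel_left₀ _ hc.ne']

/-- The Zaider–Minerbo TCP
`TCP(t) = [1 - n(t)/(n₀ + b n₀ n(t) ∫₀ᵗ ds/n(s))]^{n₀}` with
`n(t) = n₀ exp(bt - ∫₀ᵗ r(s)ds)` takes values in `[0,1]`, and for `b = 0`
it reduces to `TCP(t) = (1 - exp(-∫₀ᵗ r(s)ds))^{n₀}`. -/
theorem zaider_minerbo_TCP (n₀ : ℕ) (hn₀ : 0 < n₀) (b : ℝ) (hb : 0 ≤ b)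
    (r : ℝ → ℝ) (hr : Continuous r) (hrpos : ∀ t, 0 ≤ r t)
    (n : ℝ → ℝ)
    (hn : ∀ t, n t = (n₀ : ℝ) * Real.exp (b * t - ∫ s in (0:ℝ)..t, r s))
    (TCP : ℝ → ℝ)
    (hTCP : ∀ t, TCP t =
      (1 - n t / ((n₀ : ℝ) + b * (n₀ : ℝ) * n t *
        ∫ s in (0:ℝ)..t, 1 / n s)) ^ n₀) :
    (∀ t ≥ (0:ℝ), 0 ≤ TCP t ∧ TCP t ≤ 1) ∧
      (b = 0 → ∀ t ≥ (0:ℝ),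
        TCP t = (1 - Real.exp (-∫ s in (0:ℝ)..t, r s)) ^ n₀) :=
  zaider_minerbo_TCP_general n₀ hn₀ b r hr hrpos n hn TCP hTCP
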